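/- arXiv:2504.05010 — 8 statements merged into one kernel-verified Lean document; each statement's English description precedes it below -/
import Mathlib

section
/- For fixed r > 0, the function b(θ) = artanh(sinh(r)·tan(θ/2)) is strictly convex on the set of θ ∈ (0, π) for which sinh(r)·tan(θ/2) < 1. -/
open Real

noncomputable def artanh (x : ℝ) : ℝ := Real.log ((1 + x) / (1 - x)) / 2

noncomputable def arccot (x : ℝ) : ℝ := Real.pi / 2 - Real.arctan x

noncomputable def arcosh (x : ℝ) : ℝ := Real.log (x + Real.sqrt (x ^ 2 - 1))

/-! `b` is `artanh`, which is convex and strictly increasing on `[0, 1)`, composed with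
`θ ↦ sinh r · tan (θ / 2)`, which is strictly convex on `(0, π)` because `tan' = 1 / cos²` increases
on `[0, π / 2)`. The domain is a strict sublevel set of this inner convex function, hence convex. -/

open Set

theorem ConvexOn.comp_strictConvexOn_of_mapsTo {𝕜 E β α : Type*} [Semiring 𝕜] [PartialOrder 𝕜]
    [AddCommMonoid E] [AddCommMonoid β] [PartialOrder β] [AddCommMonoid α] [PartialOrder α]
    [SMul 𝕜 E] [SMul 𝕜 β] [SMul 𝕜 α] {s : Set E} {t : Set β} {f : E → β} {g : β → α}
    (hg : ConvexOn 𝕜 t g) (hf : StrictConvexOn 𝕜 s f) (hg' : StrictMonoOn g t)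
    (hst : MapsTo f s t) : StrictConvexOn 𝕜 s (g ∘ f) := by
  refine ⟨hf.1, fun x hx y hy hxy a b ha hb hab => ?_⟩
  have hcomb : a • f x + b • f y ∈ t := hg.1 (hst hx) (hst hy) ha.le hb.le hab
  calc g (f (a • x + b • y)) < g (a • f x + b • f y) :=
        hg' (hst (hf.1 hx hy ha.le hb.le hab)) hcomb (hf.2 hx hy hxy ha hb hab)
    _ ≤ a • g (f x) + b • g (f y) := hg.2 (hst hx) (hst hy) ha.le hb.le hab

theorem Real.strictConvexOn_tan : StrictConvexOn ℝ (Ico 0 (π / 2)) tan := by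
  refine StrictMonoOn.strictConvexOn_of_deriv (convex_Ico 0 (π / 2))
    (continuousOn_tan_Ioo.mono fun x hx => ⟨by linarith [pi_pos, hx.1], hx.2⟩) ?_
  rw [interior_Ico]
  intro x hx y hy hxy
  have hcos : cos y < cos x := cos_lt_cos_of_nonneg_of_le_pi_div_two hx.1.le hy.2.le hxy
  have hcos_pos : 0 < cos y := cos_pos_of_mem_Ioo ⟨by linarith [pi_pos, hy.1], hy.2⟩
  simp only [deriv_tan]
  gcongr

theorem strictConvexOn_mul_tan_half {c : ℝ} (hc : 0 < c) :
    StrictConvexOn ℝ (Ioo 0 π) fun θ => c * tan (θ / 2) := by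
  refine ⟨convex_Ioo 0 π, fun x hx y hy hxy a b ha hb hab => ?_⟩
  have half_mem {θ : ℝ} (hθ : θ ∈ Ioo 0 π) : θ / 2 ∈ Ico 0 (π / 2) :=
    ⟨by linarith [hθ.1], by linarith [hθ.2]⟩
  have htan := strictConvexOn_tan.2 (half_mem hx) (half_mem hy) (by simpa using hxy) ha hb hab
  simp only [smul_eq_mul] at htan ⊢
  rw [show (a * x + b * y) / 2 = a * (x / 2) + b * (y / 2) by ring]
  nlinarith

theorem hasDerivAt_artanh {x : ℝ} (hx : x ∈ Ioo (-1) 1) :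
    HasDerivAt _root_.artanh (1 / (1 - x ^ 2)) x := by
  have h₁ : 1 + x ≠ 0 := by linarith [hx.1]
  have h₂ : 1 - x ≠ 0 := by linarith [hx.2]
  have hquot : HasDerivAt (fun y => (1 + y) / (1 - y)) (2 / (1 - x) ^ 2) x :=
    (((hasDerivAt_id' x).const_add 1).div ((hasDerivAt_id' x).const_sub 1) h₂).congr_deriv
      (by ring)
  have h₃ : 1 - x ^ 2 ≠ 0 := by nlinarith [hx.1, hx.2]
  refine ((hquot.log (div_ne_zero h₁ h₂)).div_const 2).congr_deriv ?_
  field_simp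
  ring

theorem strictConvexOn_artanh : StrictConvexOn ℝ (Ico 0 1) _root_.artanh := by
  refine StrictMonoOn.strictConvexOn_of_deriv (convex_Ico 0 1)
    (fun x hx => (hasDerivAt_artanh ⟨by linarith [hx.1], hx.2⟩).continuousAt.continuousWithinAt) ?_
  rw [interior_Ico]
  intro x hx y hy hxy
  rw [(hasDerivAt_artanh ⟨by linarith [hx.1], hx.2⟩).deriv,
    (hasDerivAt_artanh ⟨by linarith [hy.1], hy.2⟩).deriv]
  have : 0 < 1 - y ^ 2 := by nlinarith [hy.1, hy.2]
  gcongr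
  exact hx.1.le

theorem eqOn_artanh_real_artanh : EqOn _root_.artanh Real.artanh (Ioo (-1) 1) := fun x hx => by
  rw [Real.artanh_eq_half_log (Ioo_subset_Icc_self hx), _root_.artanh]
  ring

theorem stmt2 (r : ℝ) (hr : 0 < r) :
    StrictConvexOn ℝ {θ : ℝ | θ ∈ Set.Ioo 0 π ∧ Real.sinh r * Real.tan (θ / 2) < 1}
      (fun θ => _root_.artanh (Real.sinh r * Real.tan (θ / 2))) := by
  have hf := strictConvexOn_mul_tan_half (sinh_pos_iff.2 hr)
  have hmaps : MapsTo (fun θ => sinh r * tan (θ / 2))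
      {θ | θ ∈ Ioo 0 π ∧ sinh r * tan (θ / 2) < 1} (Ico 0 1) := by
    rintro θ ⟨hθ, hlt⟩
    refine ⟨mul_nonneg (sinh_pos_iff.2 hr).le (tan_pos_of_pos_of_lt_pi_div_two ?_ ?_).le, hlt⟩ <;>
      linarith [hθ.1, hθ.2]
  exact strictConvexOn_artanh.convexOn.comp_strictConvexOn_of_mapsTo
    (hf.subset (fun θ hθ => hθ.1) (hf.convexOn.convex_lt 1))
    ((Real.strictMonoOn_artanh.congr eqOn_artanh_real_artanh.symm).mono
      fun x hx => ⟨by linarith [hx.1], hx.2⟩) hmaps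
end

section
/- For fixed R > 0, the function b(θ) = arsinh(sin(θ/2)·sinh(R)) is strictly concave on (0, π). -/
open Real

/-!
`sin` is strictly concave on `[0, π]`, so `θ ↦ sin (θ / 2) * sinh R` is strictly concave on
`(0, π)` with values in `[0, ∞)`. On `[0, ∞)`, `arsinh` is strictly increasing and concave (its
derivative `(1 + x²)^(-1/2)` decreases), and such an outer function preserves strict concavity.
-/

open Set

section Composition

variable {𝕜 E F α β : Type*} [Semiring 𝕜] [PartialOrder 𝕜]
  [AddCommMonoid E] [AddCommMonoid F] [AddCommMonoid α] [PartialOrder α]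
  [AddCommMonoid β] [PartialOrder β] [SMul 𝕜 α] [SMul 𝕜 β]

theorem StrictConcaveOn.comp_linearMap [Module 𝕜 E] [Module 𝕜 F] {f : F → β} {s : Set F}
    (hf : StrictConcaveOn 𝕜 s f) {g : E →ₗ[𝕜] F} (hg : Function.Injective g) :
    StrictConcaveOn 𝕜 (g ⁻¹' s) (f ∘ g) :=
  ⟨hf.1.linear_preimage g, fun x hx y hy hxy a b ha hb hab => by
    simpa only [Function.comp, map_add, map_smul] using hf.2 hx hy (hg.ne hxy) ha hb hab⟩

theorem ConcaveOn.comp_strictConcaveOn_of_mapsTo [SMul 𝕜 E] {f : E → β} {g : β → α}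
    {s : Set E} {t : Set β} (hg : ConcaveOn 𝕜 t g) (hf : StrictConcaveOn 𝕜 s f)
    (hg' : StrictMonoOn g t) (hst : MapsTo f s t) : StrictConcaveOn 𝕜 s (g ∘ f) := by
  refine ⟨hf.1, fun x hx y hy hxy a b ha hb hab => ?_⟩
  have hcombo : a • f x + b • f y ∈ t := hg.1 (hst hx) (hst hy) ha.le hb.le hab
  calc a • g (f x) + b • g (f y)
      ≤ g (a • f x + b • f y) := hg.2 (hst hx) (hst hy) ha.le hb.le hab
    _ < g (f (a • x + b • y)) :=
        hg' hcombo (hst (hf.1 hx hy ha.le hb.le hab)) (hf.2 hx hy hxy ha hb hab)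

end Composition

theorem StrictConcaveOn.mul_const {𝕜 E : Type*} [CommSemiring 𝕜] [PartialOrder 𝕜]
    [IsStrictOrderedRing 𝕜] [AddCommMonoid E] [SMul 𝕜 E] {s : Set E} {f : E → 𝕜}
    (hf : StrictConcaveOn 𝕜 s f) {c : 𝕜} (hc : 0 < c) :
    StrictConcaveOn 𝕜 s fun x => f x * c :=
  ⟨hf.1, fun x hx y hy hxy a b ha hb hab => by
    simpa only [smul_eq_mul, add_mul, mul_assoc] using
      mul_lt_mul_of_pos_right (hf.2 hx hy hxy ha hb hab) hc⟩

theorem Real.strictConcaveOn_arsinh_Ici : StrictConcaveOn ℝ (Ici 0) arsinh := by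
  refine StrictAntiOn.strictConcaveOn_of_deriv (convex_Ici 0) continuous_arsinh.continuousOn ?_
  rw [interior_Ici]
  intro x hx y _ hxy
  simp only [(hasDerivAt_arsinh _).deriv]
  have hx : 0 < x := hx
  gcongr

theorem Real.strictConcaveOn_sin_half : StrictConcaveOn ℝ (Ioo 0 π) fun θ => sin (θ / 2) := by
  have h := strictConcaveOn_sin_Icc.comp_linearMap
    (g := (2⁻¹ : ℝ) • LinearMap.id) (smul_right_injective ℝ (inv_ne_zero (two_ne_zero' ℝ)))
  refine (h.subset (fun θ hθ => ?_) (convex_Ioo 0 π)).congr fun θ _ => ?_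
  · simp only [mem_preimage, LinearMap.smul_apply, LinearMap.id_apply, smul_eq_mul, mem_Icc]
    constructor <;> linarith [hθ.1, hθ.2]
  · simp [div_eq_inv_mul]

theorem stmt3 (R : ℝ) (hR : 0 < R) :
    StrictConcaveOn ℝ (Set.Ioo 0 π)
      (fun θ => Real.arsinh (Real.sin (θ / 2) * Real.sinh R)) := by
  have hsinh : 0 < sinh R := sinh_pos_iff.2 hR
  have hmaps : MapsTo (fun θ => sin (θ / 2) * sinh R) (Ioo 0 π) (Ici 0) := fun θ hθ =>
    mul_nonneg (sin_nonneg_of_nonneg_of_le_pi (by linarith [hθ.1]) (by linarith [hθ.2, pi_pos]))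
      hsinh.le
  exact strictConcaveOn_arsinh_Ici.concaveOn.comp_strictConcaveOn_of_mapsTo
    (strictConcaveOn_sin_half.mul_const hsinh) (arsinh_strictMono.strictMonoOn _) hmaps
end

section
/- For fixed r > 0, the function φ(θ) = 2·arccos(sin(θ/2)·cosh(r)) is strictly concave on the set of θ ∈ (0, π) for which sin(θ/2)·cosh(r) < 1. -/
open Real

/-! With `c = cosh r > 1`, the domain is the interval `(0, 2 arcsin c⁻¹)`, on which
`u = c sin (θ / 2)` stays in `(0, 1)`. Differentiating `2 arccos u` twice and using
`sin² + cos² = 1` gives the second derivative `c sin (θ / 2) (1 - c²) / (2 (1 - u²)^{3/2})`,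
which is negative. -/

open Set

theorem sin_half_mul_lt_one_iff {c θ : ℝ} (hc : 0 < c) (hθ : θ ∈ Ioo 0 π) :
    sin (θ / 2) * c < 1 ↔ θ < 2 * arcsin c⁻¹ := by
  have hθ2 : θ / 2 ∈ Ico (-(π / 2)) (π / 2) := ⟨by linarith [hθ.1, pi_pos], by linarith [hθ.2]⟩
  rw [← lt_div_iff₀ hc, one_div, ← lt_arcsin_iff_sin_lt' hθ2]
  constructor <;> intro h <;> linarith

theorem setOf_mem_Ioo_pi_sin_half_mul_lt_one {c : ℝ} (hc : 0 < c) :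
    {θ : ℝ | θ ∈ Ioo 0 π ∧ sin (θ / 2) * c < 1} = Ioo 0 (2 * arcsin c⁻¹) := by
  have hle : 2 * arcsin c⁻¹ ≤ π := by linarith [arcsin_le_pi_div_two c⁻¹]
  ext θ
  constructor
  · rintro ⟨hθ, hlt⟩
    exact ⟨hθ.1, (sin_half_mul_lt_one_iff hc hθ).1 hlt⟩
  · rintro ⟨h0, hlt⟩
    have hθ : θ ∈ Ioo 0 π := ⟨h0, hlt.trans_le hle⟩
    exact ⟨hθ, (sin_half_mul_lt_one_iff hc hθ).2 hlt⟩

theorem sin_half_pos_and_mul_lt_one_of_mem_Ioo {c θ : ℝ} (hc : 0 < c)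
    (hθ : θ ∈ Ioo 0 (2 * arcsin c⁻¹)) : 0 < sin (θ / 2) ∧ sin (θ / 2) * c < 1 := by
  rw [← setOf_mem_Ioo_pi_sin_half_mul_lt_one hc] at hθ
  obtain ⟨⟨h0, hπ⟩, hlt⟩ := hθ
  exact ⟨sin_pos_of_pos_of_lt_pi (by linarith) (by linarith), hlt⟩

theorem hasDerivAt_sin_half_mul (c θ : ℝ) :
    HasDerivAt (fun θ => sin (θ / 2) * c) (cos (θ / 2) / 2 * c) θ := by
  simpa [div_eq_mul_inv, mul_comm] using (((hasDerivAt_id θ).div_const 2).sin).mul_const c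

theorem hasDerivAt_two_mul_arccos_sin_half_mul {c θ : ℝ} (hu : (sin (θ / 2) * c) ^ 2 < 1) :
    HasDerivAt (fun θ => 2 * arccos (sin (θ / 2) * c))
      (-(c * cos (θ / 2)) / √(1 - (sin (θ / 2) * c) ^ 2)) θ := by
  have hne : sin (θ / 2) * c ≠ -1 ∧ sin (θ / 2) * c ≠ 1 := by
    constructor <;> rintro h <;> rw [h] at hu <;> norm_num at hu
  refine (((hasDerivAt_arccos hne.1 hne.2).comp θ
    (hasDerivAt_sin_half_mul c θ)).const_mul 2).congr_deriv ?_
  ring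

theorem hasDerivAt_neg_mul_cos_half_div_sqrt {c θ : ℝ} (hu : (sin (θ / 2) * c) ^ 2 < 1) :
    HasDerivAt (fun θ => -(c * cos (θ / 2)) / √(1 - (sin (θ / 2) * c) ^ 2))
      (c * sin (θ / 2) * (1 - c ^ 2) / (2 * √(1 - (sin (θ / 2) * c) ^ 2) ^ 3)) θ := by
  have hpos : 0 < 1 - (sin (θ / 2) * c) ^ 2 := by linarith
  have hN : HasDerivAt (fun θ => -(c * cos (θ / 2))) (c * sin (θ / 2) / 2) θ := by
    refine ((((hasDerivAt_id θ).div_const 2).cos).const_mul c).neg.congr_deriv ?_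
    simp only [id]
    ring
  have hD := (((hasDerivAt_sin_half_mul c θ).pow 2).const_sub 1).sqrt hpos.ne'
  simp only [Pi.pow_apply, Nat.cast_ofNat, Nat.add_one_sub_one, pow_one] at hD
  refine (hN.div hD (sqrt_pos.2 hpos).ne').congr_deriv ?_
  have hDsq := sq_sqrt hpos.le
  set D := √(1 - (sin (θ / 2) * c) ^ 2)
  field_simp
  rw [hDsq]
  linear_combination (-c ^ 3 * sin (θ / 2) / D ^ 3) * sin_sq_add_cos_sq (θ / 2)

theorem strictConcaveOn_two_mul_arccos_sin_half_mul {c : ℝ} (hc : 1 < c) :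
    StrictConcaveOn ℝ (Ioo 0 (2 * arcsin c⁻¹)) (fun θ => 2 * arccos (sin (θ / 2) * c)) := by
  have hc0 : 0 < c := zero_lt_one.trans hc
  have hu : ∀ θ ∈ Ioo 0 (2 * arcsin c⁻¹), (sin (θ / 2) * c) ^ 2 < 1 := fun θ hθ => by
    obtain ⟨hs, hlt⟩ := sin_half_pos_and_mul_lt_one_of_mem_Ioo hc0 hθ
    nlinarith [mul_pos hs hc0]
  refine StrictAntiOn.strictConcaveOn_of_deriv (convex_Ioo _ _) (by fun_prop) ?_
  rw [interior_Ioo]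
  refine StrictAntiOn.congr ?_
    fun θ hθ => ((hasDerivAt_two_mul_arccos_sin_half_mul (hu θ hθ)).deriv).symm
  refine strictAntiOn_of_hasDerivWithinAt_neg (convex_Ioo _ _)
    (fun θ hθ => (hasDerivAt_neg_mul_cos_half_div_sqrt (hu θ hθ)).continuousAt.continuousWithinAt)
    (fun θ hθ =>
      (hasDerivAt_neg_mul_cos_half_div_sqrt (hu θ (interior_subset hθ))).hasDerivWithinAt)
    fun θ hθ => ?_
  rw [interior_Ioo] at hθ
  have hs := (sin_half_pos_and_mul_lt_one_of_mem_Ioo hc0 hθ).1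
  have hD := sqrt_pos.2 (sub_pos.2 (hu θ hθ))
  exact div_neg_of_neg_of_pos (mul_neg_of_pos_of_neg (by positivity) (by nlinarith))
    (by positivity)

theorem stmt4 (r : ℝ) (hr : 0 < r) :
    StrictConcaveOn ℝ {θ : ℝ | θ ∈ Set.Ioo 0 π ∧ Real.sin (θ / 2) * Real.cosh r < 1}
      (fun θ => 2 * Real.arccos (Real.sin (θ / 2) * Real.cosh r)) := by
  have hc : 1 < cosh r := one_lt_cosh.2 hr.ne'
  rw [setOf_mem_Ioo_pi_sin_half_mul_lt_one (zero_lt_one.trans hc)]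
  exact strictConcaveOn_two_mul_arccos_sin_half_mul hc
end

section
/- Fix an integer n ≥ 3 and a real r > 0 with sin(π/n)·cosh(r) < 1. If θ₁, …, θ_n ∈ (0, π) satisfy θ₁ + ⋯ + θ_n = 2π and sin(θᵢ/2)·cosh(r) < 1 for each i, then (n−2)π − ∑ᵢ 2·arccos(sin(θᵢ/2)·cosh(r)) ≥ (n−2)π − 2n·arccos(sin(π/n)·cosh(r)), equivalently ∑ᵢ arccos(sin(θᵢ/2)·cosh(r)) ≤ n·arccos(sin(π/n)·cosh(r)), with equality iff all θᵢ = 2π/n. (This is the area inequality for tangential hyperbolic n-gons of inradius r via Gauss–Bonnet.) -/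
open Real

/-! With `c = cosh r > 1`, the map `θ ↦ arccos (c sin (θ/2))` is strictly concave on the interval
`(0, 2 arcsin (1/c))` where `c sin (θ/2) < 1`: its derivative is
`-(c/2) cos (θ/2) / √(1 - c² sin² (θ/2))`, and the square `(1 - s²) / (1 - c² s²)` of the last
factor increases with `s = sin (θ/2)` because `c > 1`. The inequality and its equality case are then
Jensen's inequality for equal weights `1/n`, the mean of the angles being `2π/n`. -/

open Set

section UniformJensen

variable {ι : Type*} [Fintype ι]

lemma sum_inv_card_smul (g : ι → ℝ) :
    ∑ i, (Fintype.card ι : ℝ)⁻¹ • g i = (∑ i, g i) / Fintype.card ι := by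
  rw [← Finset.smul_sum, smul_eq_mul, inv_mul_eq_div]

variable [Nonempty ι] {s : Set ℝ} {f : ℝ → ℝ} {p : ι → ℝ}

lemma ConcaveOn.sum_map_le_card_mul_map_mean (hf : ConcaveOn ℝ s f) (hp : ∀ i, p i ∈ s) :
    ∑ i, f (p i) ≤ Fintype.card ι * f ((∑ i, p i) / Fintype.card ι) := by
  have hcard : (0 : ℝ) < Fintype.card ι := by exact_mod_cast Fintype.card_pos
  have := hf.le_map_sum (t := Finset.univ) (w := fun _ ↦ (Fintype.card ι : ℝ)⁻¹)
    (fun _ _ ↦ by positivity) (by simp [hcard.ne']) (fun i _ ↦ hp i)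
  rw [sum_inv_card_smul, sum_inv_card_smul, div_le_iff₀ hcard] at this
  linarith

lemma StrictConcaveOn.sum_map_eq_card_mul_map_mean_iff (hf : StrictConcaveOn ℝ s f)
    (hp : ∀ i, p i ∈ s) :
    ∑ i, f (p i) = Fintype.card ι * f ((∑ i, p i) / Fintype.card ι) ↔
      ∀ i, p i = (∑ i, p i) / Fintype.card ι := by
  have hcard : (0 : ℝ) < Fintype.card ι := by exact_mod_cast Fintype.card_pos
  have := hf.map_sum_eq_iff (t := Finset.univ) (w := fun _ ↦ (Fintype.card ι : ℝ)⁻¹)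
    (fun _ _ ↦ by positivity) (by simp [hcard.ne']) (fun i _ ↦ hp i)
  rw [sum_inv_card_smul, sum_inv_card_smul, eq_div_iff hcard.ne'] at this
  simpa [eq_comm, mul_comm] using this

end UniformJensen

section ArccosSinHalf

variable {c : ℝ}

lemma lt_two_mul_arcsin_inv_iff (hc : 0 < c) {x : ℝ} (hx : x ∈ Ico (-π) π) :
    x < 2 * arcsin c⁻¹ ↔ sin (x / 2) * c < 1 := by
  rw [← lt_div_iff₀ hc, one_div, ← lt_arcsin_iff_sin_lt' ⟨by linarith [hx.1], by linarith [hx.2]⟩]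
  constructor <;> intro h <;> linarith

lemma hasDerivAt_arccos_sin_half_mul {x : ℝ} (hx : |sin (x / 2) * c| < 1) :
    HasDerivAt (fun y ↦ arccos (sin (y / 2) * c))
      (-(c / 2) * (cos (x / 2) / √(1 - (sin (x / 2) * c) ^ 2))) x := by
  obtain ⟨hx₁, hx₂⟩ := abs_lt.mp hx
  have := (hasDerivAt_arccos hx₁.ne' hx₂.ne).comp x
    (((hasDerivAt_id' x).div_const 2).sin.mul_const c)
  exact this.congr_deriv (by ring)

lemma sin_half_mul_mem_Ioo (hc : 0 < c) {x : ℝ} (hx : x ∈ Ioo 0 (2 * arcsin c⁻¹)) :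
    sin (x / 2) * c ∈ Ioo 0 1 := by
  have hxπ : x < π := by linarith [hx.2, arcsin_le_pi_div_two c⁻¹]
  exact ⟨mul_pos (sin_pos_of_pos_of_lt_pi (by linarith [hx.1]) (by linarith [pi_pos])) hc,
    (lt_two_mul_arcsin_inv_iff hc ⟨by linarith [hx.1], hxπ⟩).mp hx.2⟩

lemma strictMonoOn_cos_half_div_sqrt (hc : 1 < c) :
    StrictMonoOn (fun x ↦ cos (x / 2) / √(1 - (sin (x / 2) * c) ^ 2))
      (Ioo 0 (2 * arcsin c⁻¹)) := by
  intro x hx y hy hxy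
  have hx' := sin_half_mul_mem_Ioo (by linarith) hx
  have hy' := sin_half_mul_mem_Ioo (by linarith) hy
  have hπ := arcsin_le_pi_div_two c⁻¹
  have hsx : 0 < sin (x / 2) := pos_of_mul_pos_left hx'.1 (by linarith)
  have hsin : sin (x / 2) < sin (y / 2) :=
    sin_lt_sin_of_lt_of_le_pi_div_two (by linarith [hx.1, pi_pos]) (by linarith [hy.2])
      (by linarith)
  have hcos : 0 < cos (y / 2) :=
    cos_pos_of_mem_Ioo ⟨by linarith [hy.1, pi_pos], by linarith [hy.2]⟩
  have hQx : 0 < 1 - (sin (x / 2) * c) ^ 2 := by nlinarith [hx'.1, hx'.2]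
  have hQy : 0 < 1 - (sin (y / 2) * c) ^ 2 := by nlinarith [hy'.1, hy'.2]
  dsimp only
  rw [div_lt_div_iff₀ (sqrt_pos.2 hQx) (sqrt_pos.2 hQy)]
  apply lt_of_pow_lt_pow_left₀ 2 (by positivity)
  rw [mul_pow (cos _), mul_pow (cos _), sq_sqrt hQx.le, sq_sqrt hQy.le, cos_sq', cos_sq']
  -- the difference of the two sides is `(c² - 1) (sin² (y/2) - sin² (x/2))`
  nlinarith [mul_pos (by nlinarith : 0 < c ^ 2 - 1)
    (by nlinarith : 0 < sin (y / 2) ^ 2 - sin (x / 2) ^ 2)]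

theorem strictConcaveOn_arccos_sin_half_mul (hc : 1 < c) :
    StrictConcaveOn ℝ (Ioo 0 (2 * arcsin c⁻¹)) (fun y ↦ arccos (sin (y / 2) * c)) := by
  have hderiv : ∀ x ∈ Ioo 0 (2 * arcsin c⁻¹), deriv (fun y ↦ arccos (sin (y / 2) * c)) x =
      -(c / 2) * (cos (x / 2) / √(1 - (sin (x / 2) * c) ^ 2)) := fun x hx ↦ by
    have hx' := sin_half_mul_mem_Ioo (by linarith) hx
    exact (hasDerivAt_arccos_sin_half_mul (abs_lt.2 ⟨by linarith [hx'.1], hx'.2⟩)).deriv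
  refine StrictAntiOn.strictConcaveOn_of_deriv (convex_Ioo _ _) (by fun_prop) ?_
  rw [interior_Ioo]
  intro x hx y hy hxy
  rw [hderiv x hx, hderiv y hy]
  exact mul_lt_mul_of_neg_left (strictMonoOn_cos_half_div_sqrt hc hx hy hxy) (by linarith)

end ArccosSinHalf

theorem stmt8_general (n : ℕ) (r : ℝ) (hr : 0 < r)
    (θ : Fin n → ℝ) (hθ : ∀ i, θ i ∈ Set.Ioo 0 π)
    (hsum : ∑ i, θ i = 2 * π)
    (hlt : ∀ i, Real.sin (θ i / 2) * Real.cosh r < 1) :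
    ∑ i, Real.arccos (Real.sin (θ i / 2) * Real.cosh r)
      ≤ n * Real.arccos (Real.sin (π / n) * Real.cosh r) ∧
    (∑ i, Real.arccos (Real.sin (θ i / 2) * Real.cosh r)
      = n * Real.arccos (Real.sin (π / n) * Real.cosh r) ↔ ∀ i, θ i = 2 * π / n) := by
  have : NeZero n := ⟨by rintro rfl; simp at hsum⟩
  have hc : 1 < cosh r := one_lt_cosh.mpr hr.ne'
  have hmem : ∀ i, θ i ∈ Ioo 0 (2 * arcsin (cosh r)⁻¹) := fun i ↦
    ⟨(hθ i).1, (lt_two_mul_arcsin_inv_iff (by positivity) ⟨by linarith [(hθ i).1, pi_pos],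
      (hθ i).2⟩).mpr (hlt i)⟩
  have hmean : (∑ i, θ i) / Fintype.card (Fin n) = 2 * π / n := by simp [hsum]
  have hconc := strictConcaveOn_arccos_sin_half_mul hc
  have hle := hconc.concaveOn.sum_map_le_card_mul_map_mean hmem
  have heq := hconc.sum_map_eq_card_mul_map_mean_iff hmem
  rw [hmean, Fintype.card_fin, show 2 * π / n / 2 = π / n by ring] at hle heq
  exact ⟨hle, heq⟩

theorem stmt8 (n : ℕ) (hn : 3 ≤ n) (r : ℝ) (hr : 0 < r)
    (hreg : Real.sin (π / n) * Real.cosh r < 1)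
    (θ : Fin n → ℝ) (hθ : ∀ i, θ i ∈ Set.Ioo 0 π)
    (hsum : ∑ i, θ i = 2 * π)
    (hlt : ∀ i, Real.sin (θ i / 2) * Real.cosh r < 1) :
    ∑ i, Real.arccos (Real.sin (θ i / 2) * Real.cosh r)
      ≤ n * Real.arccos (Real.sin (π / n) * Real.cosh r) ∧
    (∑ i, Real.arccos (Real.sin (θ i / 2) * Real.cosh r)
      = n * Real.arccos (Real.sin (π / n) * Real.cosh r) ↔ ∀ i, θ i = 2 * π / n) :=
  stmt8_general n r hr θ hθ hsum hlt
end

section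
/- For fixed n ≥ 3, the function g(R) = arsinh(sin(π/n)·sinh(R)) is strictly convex on (0, ∞). -/
open Real

/-!
Write `f R = arsinh (k sinh R)`, so that `sinh (f R) = k sinh R`. Then
`f' = k cosh R / cosh (f R)` and, using `cosh² = 1 + sinh²` twice,
`f'' = k (1 - k²) sinh R / cosh (f R) ^ 3`, which is positive for `R > 0` as soon as
`0 < k < 1`; for `n ≥ 3` the constant `k = sin (π / n)` lies in that range.
-/

namespace Real

lemma hasDerivAt_arsinh_mul_sinh (k x : ℝ) :
    HasDerivAt (fun R => arsinh (k * sinh R)) (k * cosh x / cosh (arsinh (k * sinh x))) x := by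
  refine ((hasDerivAt_arsinh (k * sinh x)).comp x ((hasDerivAt_sinh x).const_mul k)).congr_deriv ?_
  rw [cosh_arsinh, div_eq_inv_mul]

lemma hasDerivAt_deriv_arsinh_mul_sinh (k x : ℝ) :
    HasDerivAt (fun R => k * cosh R / cosh (arsinh (k * sinh R)))
      (k * (1 - k ^ 2) * sinh x / cosh (arsinh (k * sinh x)) ^ 3) x := by
  have hc : cosh (arsinh (k * sinh x)) ≠ 0 := (cosh_pos _).ne'
  refine (((hasDerivAt_cosh x).const_mul k).div
    ((hasDerivAt_cosh _).comp x (hasDerivAt_arsinh_mul_sinh k x)) hc).congr_deriv ?_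
  have hC : cosh (arsinh (k * sinh x)) ^ 2 = 1 + (k * sinh x) ^ 2 := by
    rw [cosh_sq, sinh_arsinh]; ring
  rw [Function.comp_apply, sinh_arsinh]
  field_simp
  linear_combination k * sinh x * hC - k ^ 3 * sinh x * cosh_sq' x

lemma iterate_deriv_two_arsinh_mul_sinh (k x : ℝ) :
    deriv^[2] (fun R => arsinh (k * sinh R)) x =
      k * (1 - k ^ 2) * sinh x / cosh (arsinh (k * sinh x)) ^ 3 := by
  have hderiv : deriv (fun R => arsinh (k * sinh R)) =
      fun R => k * cosh R / cosh (arsinh (k * sinh R)) :=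
    funext fun R => (hasDerivAt_arsinh_mul_sinh k R).deriv
  rw [Function.iterate_succ_apply, Function.iterate_one, hderiv]
  exact (hasDerivAt_deriv_arsinh_mul_sinh k x).deriv

lemma strictConvexOn_arsinh_mul_sinh {k : ℝ} (hk₀ : 0 < k) (hk₁ : k < 1) :
    StrictConvexOn ℝ (Set.Ioi 0) (fun R => arsinh (k * sinh R)) := by
  have hcont : Continuous fun R => arsinh (k * sinh R) :=
    continuous_arsinh.comp (continuous_const.mul continuous_sinh)
  refine strictConvexOn_of_deriv2_pos (convex_Ioi 0) hcont.continuousOn fun x hx => ?_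
  rw [interior_Ioi] at hx
  have hsinh : 0 < sinh x := sinh_pos_iff.mpr hx
  have hk : 0 < 1 - k ^ 2 := by nlinarith
  rw [iterate_deriv_two_arsinh_mul_sinh]
  exact div_pos (by positivity) (pow_pos (cosh_pos _) 3)

lemma sin_pi_div_mem_Ioo {n : ℕ} (hn : 2 < n) : sin (π / n) ∈ Set.Ioo 0 1 := by
  have hn' : (2 : ℝ) < n := by exact_mod_cast hn
  have hlt : π / n < π / 2 := div_lt_div_of_pos_left pi_pos two_pos hn'
  have hpos : 0 < π / n := by positivity
  refine ⟨sin_pos_of_pos_of_lt_pi hpos (by linarith), ?_⟩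
  simpa using sin_lt_sin_of_lt_of_le_pi_div_two (by linarith) le_rfl hlt

end Real

theorem stmt10 (n : ℕ) (hn : 3 ≤ n) :
    StrictConvexOn ℝ (Set.Ioi 0)
      (fun R => Real.arsinh (Real.sin (π / n) * Real.sinh R)) :=
  strictConvexOn_arsinh_mul_sinh (sin_pi_div_mem_Ioo hn).1 (sin_pi_div_mem_Ioo hn).2
end

section
/- For fixed n ≥ 3, the function h(r) = arccos(sin(π/n)·cosh(r)) is strictly concave on the interval of r > 0 where sin(π/n)·cosh(r) < 1. -/
/-!
`arccos` is concave and strictly decreasing on `[0, 1]` (its derivative `-1/√(1 - x²)` decreases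
there), while `r ↦ s cosh r` is strictly convex for `s > 0`. A concave, strictly decreasing
function of a strictly convex function is strictly concave, and `sin (π / n) > 0` for `n ≥ 2`.
-/

open Real

open Set

theorem strictConcaveOn_arccos : StrictConcaveOn ℝ (Icc 0 1) arccos := by
  refine StrictAntiOn.strictConcaveOn_of_deriv (convex_Icc 0 1) continuous_arccos.continuousOn ?_
  rw [interior_Icc, deriv_arccos]
  intro x ⟨hx0, hx1⟩ y ⟨_, hy1⟩ hxy
  have hy : 0 < 1 - y ^ 2 := by nlinarith
  have hsqrt : √(1 - y ^ 2) < √(1 - x ^ 2) := sqrt_lt_sqrt hy.le (by nlinarith)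
  simpa using one_div_lt_one_div_of_lt (sqrt_pos.2 hy) hsqrt

theorem strictConvexOn_const_mul_cosh {s : ℝ} (hs : 0 < s) :
    StrictConvexOn ℝ univ (fun r => s * cosh r) := by
  refine strictConvexOn_univ_of_deriv2_pos (by fun_prop) fun r => ?_
  have hderiv : deriv (fun r => s * cosh r) = fun r => s * sinh r := by
    ext r; exact ((hasDerivAt_cosh r).const_mul s).deriv
  rw [Function.iterate_succ_apply, Function.iterate_one, hderiv,
    ((hasDerivAt_sinh r).const_mul s).deriv]
  positivity

theorem strictConcaveOn_arccos_const_mul_cosh {s : ℝ} (hs : 0 < s) :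
    StrictConcaveOn ℝ {r | s * cosh r < 1} (fun r => arccos (s * cosh r)) := by
  have hdom : Convex ℝ {r | s * cosh r < 1} := by
    simpa using (strictConvexOn_const_mul_cosh hs).convexOn.convex_lt 1
  have hconv : StrictConvexOn ℝ {r | s * cosh r < 1} (fun r => s * cosh r) :=
    (strictConvexOn_const_mul_cosh hs).subset (subset_univ _) hdom
  have himage : (fun r => s * cosh r) '' {r | s * cosh r < 1} ⊆ Icc 0 1 := by
    rintro _ ⟨r, hr, rfl⟩
    exact ⟨by positivity, hr.le⟩
  have himage_convex : Convex ℝ ((fun r => s * cosh r) '' {r | s * cosh r < 1}) :=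
    (hdom.isPreconnected.image _ (by fun_prop)).convex
  exact (strictConcaveOn_arccos.concaveOn.subset himage himage_convex).comp_strictConvexOn hconv
    (strictAntiOn_arccos.mono (himage.trans (Icc_subset_Icc (by norm_num) le_rfl)))

theorem stmt16 (n : ℕ) (hn : 3 ≤ n) :
    StrictConcaveOn ℝ {r : ℝ | 0 < r ∧ Real.sin (π / n) * Real.cosh r < 1}
      (fun r => Real.arccos (Real.sin (π / n) * Real.cosh r)) := by
  have hsin : 0 < sin (π / n) := by
    have hn' : (1 : ℝ) < n := by exact_mod_cast (by omega : 1 < n)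
    exact sin_pos_of_pos_of_lt_pi (by positivity) (div_lt_self pi_pos hn')
  have h := strictConcaveOn_arccos_const_mul_cosh hsin
  exact h.subset (fun r hr => hr.2) ((convex_Ioi 0).inter h.1)
end

section
/- For fixed n ≥ 3, the function f(θ) = arcosh(cos(π/n)/sin(θ/2)) is strictly convex on the interval (0, 2·arcsin(√(1 − sin(π/n)))). -/
open Real

/-!
Write `c = cos (π / n)`, `s = sin (π / n)` and `x = sin² (θ / 2)`. By the chain rule
`f' θ = -(c / 2) / √(q x)` with `q x = x (c² - x) / (1 - x)`. As `c² = 1 - s²`, putting `y = 1 - x`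
gives `q = 1 + s² - (y + s² / y)`, and `y + s² / y` increases for `y > s`. So `q` increases on
`x < 1 - s`, which is exactly the range of `θ` in question, and `f'` increases with `θ`.
-/

open Set

lemma strictMonoOn_sin_half_sq : StrictMonoOn (fun θ : ℝ => sin (θ / 2) ^ 2) (Icc 0 π) := by
  intro a ⟨ha0, haπ⟩ b ⟨hb0, hbπ⟩ hab
  have hsin : sin (a / 2) < sin (b / 2) :=
    sin_lt_sin_of_lt_of_le_pi_div_two (by linarith [pi_pos]) (by linarith) (by linarith)
  exact pow_lt_pow_left₀ hsin (sin_nonneg_of_nonneg_of_le_pi (by linarith) (by linarith))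
    two_ne_zero

lemma sin_half_sq_mem_Ioo_of_mem_Ioo_two_mul_arcsin_sqrt {a θ : ℝ} (ha : a ≤ 1)
    (hθ : θ ∈ Ioo 0 (2 * arcsin √a)) : θ ∈ Ioo 0 π ∧ sin (θ / 2) ^ 2 ∈ Ioo 0 a := by
  obtain ⟨hθ0, hθa⟩ := hθ
  have hsqrt : √a ≤ 1 := sqrt_le_one.mpr ha
  have hθπ : θ < π := by linarith [arcsin_le_pi_div_two √a]
  have hsin_lt : sin (θ / 2) < √a := by
    rw [← lt_arcsin_iff_sin_lt ⟨by linarith, by linarith⟩ ⟨by linarith [sqrt_nonneg a], hsqrt⟩]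
    linarith
  have hsin_pos : 0 < sin (θ / 2) := sin_pos_of_pos_of_lt_pi (by linarith) (by linarith)
  exact ⟨⟨hθ0, hθπ⟩, pow_pos hsin_pos 2, (lt_sqrt hsin_pos.le).mp hsin_lt⟩

lemma strictMonoOn_mul_sub_div_one_sub {s : ℝ} (hs : 0 ≤ s) :
    StrictMonoOn (fun x : ℝ => x * (1 - s ^ 2 - x) / (1 - x)) (Iio (1 - s)) := by
  intro x hx y hy hxy
  simp only [mem_Iio] at hx hy
  rw [div_lt_div_iff₀ (by linarith) (by linarith)]
  nlinarith [mul_pos (sub_pos.2 hxy) (mul_pos (sub_pos.2 hx) (sub_pos.2 hy)),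
    mul_nonneg hs (sub_pos.2 hxy).le]

lemma hasDerivAt_arcosh_div_sin_half {c θ : ℝ} (hc : 0 < c) (hθ : θ ∈ Ioo 0 π)
    (hsin : sin (θ / 2) ^ 2 < c ^ 2) :
    HasDerivAt (fun θ => _root_.arcosh (c / sin (θ / 2)))
      (-(c / 2) / √(sin (θ / 2) ^ 2 * (c ^ 2 - sin (θ / 2) ^ 2) / (1 - sin (θ / 2) ^ 2))) θ := by
  have hS : 0 < sin (θ / 2) :=
    sin_pos_of_pos_of_lt_pi (by linarith [hθ.1]) (by linarith [hθ.2, pi_pos])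
  have hC : 0 < cos (θ / 2) := cos_pos_of_mem_Ioo ⟨by linarith [hθ.1, pi_pos], by linarith [hθ.2]⟩
  have hcS : 1 < c / sin (θ / 2) := by
    rw [one_lt_div hS]
    exact lt_of_pow_lt_pow_left₀ 2 hc.le hsin
  have hdiv : HasDerivAt (fun θ => c / sin (θ / 2))
      ((0 * sin (θ / 2) - c * (cos (θ / 2) * (1 / 2))) / sin (θ / 2) ^ 2) θ :=
    (hasDerivAt_const θ c).div ((hasDerivAt_id θ).div_const 2).sin hS.ne'
  -- `arcosh` above and Mathlib's `Real.arcosh` have the same body.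
  refine ((Real.hasDerivAt_arcosh hcS).comp θ hdiv).congr_deriv ?_
  have hsqrt : √(sin (θ / 2) ^ 2 * (c ^ 2 - sin (θ / 2) ^ 2) / (1 - sin (θ / 2) ^ 2))
      = sin (θ / 2) ^ 2 / cos (θ / 2) * √((c / sin (θ / 2)) ^ 2 - 1) := by
    rw [← sqrt_sq (by positivity : 0 ≤ sin (θ / 2) ^ 2 / cos (θ / 2)), ← sqrt_mul (sq_nonneg _),
      ← cos_sq']
    congr 1
    field_simp
  rw [hsqrt]
  field_simp
  ring

lemma pi_div_natCast_mem_Ioo {n : ℕ} (hn : 3 ≤ n) : π / n ∈ Ioo 0 (π / 2) := by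
  have : (3 : ℝ) ≤ n := by exact_mod_cast hn
  refine ⟨by positivity, ?_⟩
  rw [div_lt_div_iff₀ (by linarith) two_pos]
  nlinarith [pi_pos]

theorem stmt17 (n : ℕ) (hn : 3 ≤ n) :
    StrictConvexOn ℝ (Set.Ioo 0 (2 * Real.arcsin (Real.sqrt (1 - Real.sin (π / n)))))
      (fun θ => _root_.arcosh (Real.cos (π / n) / Real.sin (θ / 2))) := by
  have hπn := pi_div_natCast_mem_Ioo hn
  set s := sin (π / n)
  set c := cos (π / n)
  have hs : 0 < s := sin_pos_of_pos_of_lt_pi hπn.1 (by linarith [hπn.2, pi_pos])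
  have hc : 0 < c := cos_pos_of_mem_Ioo ⟨by linarith [hπn.1, pi_pos], hπn.2⟩
  have hc2 : c ^ 2 = 1 - s ^ 2 := cos_sq' _
  have hs1 : s < 1 := by nlinarith
  have hI θ (hθ : θ ∈ Ioo 0 (2 * arcsin √(1 - s))) :=
    sin_half_sq_mem_Ioo_of_mem_Ioo_two_mul_arcsin_sqrt (by linarith) hθ
  have hderiv θ (hθ : θ ∈ Ioo 0 (2 * arcsin √(1 - s))) :=
    hasDerivAt_arcosh_div_sin_half hc (hI θ hθ).1 (by nlinarith [(hI θ hθ).2.2])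
  refine StrictMonoOn.strictConvexOn_of_deriv (convex_Ioo _ _)
    (fun θ hθ => (hderiv θ hθ).continuousAt.continuousWithinAt) ?_
  rw [interior_Ioo]
  intro a ha b hb hab
  rw [(hderiv a ha).deriv, (hderiv b hb).deriv, hc2]
  have hsin_sq := strictMonoOn_sin_half_sq (Ioo_subset_Icc_self (hI a ha).1)
    (Ioo_subset_Icc_self (hI b hb).1) hab
  have hq := strictMonoOn_mul_sub_div_one_sub hs.le (hI a ha).2.2 (hI b hb).2.2 hsin_sq
  have hq_pos : 0 < sin (a / 2) ^ 2 * (1 - s ^ 2 - sin (a / 2) ^ 2) / (1 - sin (a / 2) ^ 2) := by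
    simpa using strictMonoOn_mul_sub_div_one_sub hs.le (by simpa : (0 : ℝ) ∈ Iio (1 - s))
      (hI a ha).2.2 (hI a ha).2.1
  rw [neg_div, neg_div]
  exact neg_lt_neg (div_lt_div_of_pos_left (by positivity) (sqrt_pos.2 hq_pos)
    (sqrt_lt_sqrt hq_pos.le hq))
end

section
/- For fixed n ≥ 3, the function f(x) = arcsin(cos(π/n)/cosh(x/(2n))) is strictly convex on the interval (2n·arcosh(√(1 + sin(π/n))), ∞). -/
open Real

/-!
With `c = cos θ`, `s = sin θ` and `T = cosh u`, the derivative of `u ↦ arcsin (c / cosh u)`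
is `-c · sinh u / (T √(T² - c²))`, whose square is `c² h(T²)` with
`h t = (t - 1) / (t (t - c²))`. Since
  `t₁ (t₁ - c²)(t₂ - 1) - t₂ (t₂ - c²)(t₁ - 1) = (t₁ - t₂)((t₁ - 1)(t₂ - 1) - s²)`,
the function `h` is strictly decreasing for `t > 1 + s`, i.e. for `u > arcosh √(1 + s)`,
so the derivative is strictly increasing there. The variable `x = 2n u` only rescales the
interval.
-/

open Set

lemma StrictConvexOn.comp_div_const {g : ℝ → ℝ} {a k : ℝ} (hk : 0 < k)
    (hg : StrictConvexOn ℝ (Ioi a) g) : StrictConvexOn ℝ (Ioi (k * a)) fun x => g (x / k) := by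
  have mem : ∀ x ∈ Ioi (k * a), x / k ∈ Ioi a := fun x hx => by
    rw [mem_Ioi, lt_div_iff₀ hk, mul_comm]; exact hx
  refine ⟨convex_Ioi _, fun x hx y hy hxy p q hp hq hpq => ?_⟩
  have hxy' : x / k ≠ y / k := fun h => hxy ((div_left_inj' hk.ne').1 h)
  convert hg.2 (mem x hx) (mem y hy) hxy' hp hq hpq using 2
  simp only [smul_eq_mul]
  ring

section

variable {c s : ℝ}

lemma strictAntiOn_sub_one_div_mul_sub (hcs : c ^ 2 + s ^ 2 = 1) (hs : 0 ≤ s) :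
    StrictAntiOn (fun t => (t - 1) / (t * (t - c ^ 2))) (Ioi (1 + s)) := by
  intro t₁ (ht₁ : 1 + s < t₁) t₂ (ht₂ : 1 + s < t₂) ht
  have hc2 : c ^ 2 ≤ 1 := by nlinarith
  rw [div_lt_div_iff₀ (by nlinarith) (by nlinarith)]
  have key : (t₁ - 1) * (t₂ * (t₂ - c ^ 2)) - (t₂ - 1) * (t₁ * (t₁ - c ^ 2))
      = (t₂ - t₁) * ((t₁ - 1) * (t₂ - 1) - s ^ 2) := by
    linear_combination (t₂ - t₁) * hcs
  have hprod : s ^ 2 < (t₁ - 1) * (t₂ - 1) := by nlinarith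
  nlinarith [mul_pos (sub_pos.2 ht) (sub_pos.2 hprod)]

lemma hasDerivAt_arcsin_div_cosh {u : ℝ} (hcu : |c| < cosh u) :
    HasDerivAt (fun u => arcsin (c / cosh u))
      (-c * (sinh u / (cosh u * √(cosh u ^ 2 - c ^ 2)))) u := by
  have hT : 0 < cosh u := cosh_pos u
  have hquot : |c / cosh u| < 1 := by
    rwa [abs_div, abs_of_pos hT, div_lt_one hT]
  have hsqrt : √(1 - (c / cosh u) ^ 2) = √(cosh u ^ 2 - c ^ 2) / cosh u := by
    rw [show 1 - (c / cosh u) ^ 2 = (cosh u ^ 2 - c ^ 2) / cosh u ^ 2 by field_simp,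
      sqrt_div' _ (sq_nonneg _), sqrt_sq hT.le]
  have hR : 0 < √(cosh u ^ 2 - c ^ 2) := sqrt_pos.2 (by nlinarith [sq_abs c, abs_nonneg c])
  have hquot' := (hasDerivAt_const u c).div (hasDerivAt_cosh u) hT.ne'
  have harcsin := hasDerivAt_arcsin (abs_lt.1 hquot).1.ne' (abs_lt.1 hquot).2.ne
  refine (harcsin.comp u hquot').congr_deriv ?_
  rw [hsqrt]
  field_simp
  ring

lemma one_add_lt_cosh_sq {u : ℝ} (hs : 0 ≤ s) (hu : Real.arcosh √(1 + s) < u) :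
    1 + s < cosh u ^ 2 := by
  have h1 : 1 ≤ √(1 + s) := one_le_sqrt.2 (by linarith)
  have hA := Real.arcosh_nonneg h1
  have hcosh : √(1 + s) < cosh u := by
    rw [← Real.cosh_arcosh h1, cosh_lt_cosh, abs_of_nonneg hA, abs_of_pos (hA.trans_lt hu)]
    exact hu
  calc 1 + s = √(1 + s) ^ 2 := (sq_sqrt (by linarith)).symm
    _ < cosh u ^ 2 := by gcongr

lemma strictAntiOn_sinh_div_cosh_mul_sqrt (hcs : c ^ 2 + s ^ 2 = 1) (hs : 0 ≤ s) :
    StrictAntiOn (fun u => sinh u / (cosh u * √(cosh u ^ 2 - c ^ 2)))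
      (Ioi (Real.arcosh √(1 + s))) := by
  have hA : 0 ≤ Real.arcosh √(1 + s) := Real.arcosh_nonneg (one_le_sqrt.2 (by linarith))
  have sq_eq : ∀ u ∈ Ioi (Real.arcosh √(1 + s)),
      (sinh u / (cosh u * √(cosh u ^ 2 - c ^ 2))) ^ 2
        = (cosh u ^ 2 - 1) / (cosh u ^ 2 * (cosh u ^ 2 - c ^ 2)) := fun u hu => by
    have := one_add_lt_cosh_sq hs hu
    rw [div_pow, mul_pow, sq_sqrt (by nlinarith), sinh_sq]
  have nonneg : ∀ u ∈ Ioi (Real.arcosh √(1 + s)),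
      0 ≤ sinh u / (cosh u * √(cosh u ^ 2 - c ^ 2)) := fun u (hu : _ < u) => by
    have := sinh_nonneg_iff.2 (hA.trans hu.le)
    positivity
  intro u hu v hv huv
  have hcosh : cosh u ^ 2 < cosh v ^ 2 := by
    have hu0 : 0 < u := hA.trans_lt hu
    gcongr
    rw [cosh_lt_cosh, abs_of_pos hu0, abs_of_pos (hu0.trans huv)]
    exact huv
  rw [← pow_lt_pow_iff_left₀ (nonneg v hv) (nonneg u hu) two_ne_zero, sq_eq u hu, sq_eq v hv]
  exact strictAntiOn_sub_one_div_mul_sub hcs hs (one_add_lt_cosh_sq hs hu)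
    (one_add_lt_cosh_sq hs hv) hcosh

end

theorem strictConvexOn_arcsin_cos_div_cosh {θ : ℝ} (hθ₀ : 0 ≤ θ) (hθ : θ < π / 2) :
    StrictConvexOn ℝ (Ioi (Real.arcosh √(1 + sin θ))) fun u => arcsin (cos θ / cosh u) := by
  have hc : 0 < cos θ := cos_pos_of_mem_Ioo ⟨by linarith [pi_pos], hθ⟩
  have hs : 0 ≤ sin θ := sin_nonneg_of_nonneg_of_le_pi hθ₀ (by linarith [pi_pos])
  have hA : 0 ≤ Real.arcosh √(1 + sin θ) := Real.arcosh_nonneg (one_le_sqrt.2 (by linarith))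
  have hcos_lt : ∀ u ∈ Ioi (Real.arcosh √(1 + sin θ)), |cos θ| < cosh u :=
    fun u (hu : _ < u) => (abs_cos_le_one θ).trans_lt (one_lt_cosh.2 (hA.trans_lt hu).ne')
  refine StrictMonoOn.strictConvexOn_of_deriv (convex_Ioi _) ?_ ?_
  · exact (continuous_arcsin.comp
      (continuous_const.div continuous_cosh fun u => (cosh_pos u).ne')).continuousOn
  rw [interior_Ioi]
  refine StrictMonoOn.congr (fun u hu v hv huv => ?_)
    fun u hu => (hasDerivAt_arcsin_div_cosh (hcos_lt u hu)).deriv.symm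
  exact mul_lt_mul_of_neg_left
    (strictAntiOn_sinh_div_cosh_mul_sqrt (cos_sq_add_sin_sq θ) hs hu hv huv) (neg_neg_of_pos hc)

theorem stmt19 (n : ℕ) (hn : 3 ≤ n) :
    StrictConvexOn ℝ (Set.Ioi (2 * n * _root_.arcosh (Real.sqrt (1 + Real.sin (π / n)))))
      (fun x => Real.arcsin (Real.cos (π / n) / Real.cosh (x / (2 * n)))) := by
  have hn' : (3 : ℝ) ≤ n := by exact_mod_cast hn
  have hθ : π / n < π / 2 := div_lt_div_of_pos_left pi_pos two_pos (by linarith)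
  -- `arcosh` is definitionally Mathlib's `Real.arcosh`.
  exact (strictConvexOn_arcsin_cos_div_cosh (by positivity) hθ).comp_div_const (by positivity)
end
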